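/- arXiv:2301.12989 — 10 statements merged into one kernel-verified Lean document; each statement's English description precedes it below -/
import Mathlib

section
/- Let X, A, B be types and let f be a subdistribution kernel from X to A × B. Then there exist a subdistribution kernel m from X to A and a subdistribution kernel c from A × X to B such that c is quasi-total and f x (a, b) = m x a * c (a, x) b for all x : X, a : A, b : B. (This is the existence of quasi-total conditionals in the Kleisli category of the finitary subdistribution monad, making it a partial Markov category.) -/
open scoped ENNReal

/-!
Take for `m x` the first marginal of `f x` and for `c (a, x)` the normalisation of the slice
`b ↦ f x (a, b)` by its mass `m x a`. This mass is finite, so the normalised slice has total mass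
`m x a / m x a`, which is `1`, or `0` when the slice vanishes (`0 / 0 = 0` in `ℝ≥0∞`); in the
latter case both sides of the factorisation vanish.
-/

namespace ENNReal

variable {α β : Type*}

theorem tsum_div_tsum_self_eq_zero_or_one (g : α → ℝ≥0∞) (hg : ∑' a, g a ≠ ∞) :
    ∑' a, g a / ∑' a', g a' = 0 ∨ ∑' a, g a / ∑' a', g a' = 1 := by
  simp only [div_eq_mul_inv, ENNReal.tsum_mul_right]
  rcases eq_or_ne (∑' a, g a) 0 with h | h
  · simp [h]
  · exact .inr (ENNReal.mul_inv_cancel h hg)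

theorem tsum_mul_div_tsum_self (g : α → ℝ≥0∞) (hg : ∑' a, g a ≠ ∞) (a : α) :
    (∑' a', g a') * (g a / ∑' a', g a') = g a := by
  rcases eq_or_ne (∑' a', g a') 0 with h | h
  · simp [h, ENNReal.tsum_eq_zero.mp h a]
  · exact ENNReal.mul_div_cancel h hg

theorem tsum_slice_le_tsum (f : α × β → ℝ≥0∞) (a : α) : ∑' b, f (a, b) ≤ ∑' p, f p :=
  ENNReal.tsum_comp_le_tsum_of_injective (Prod.mk_right_injective a) f

end ENNReal

/-- Existence of quasi-total conditionals for subdistribution kernels: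
the Kleisli category of the finitary subdistribution monad is a partial Markov
category. -/
theorem subdistKernel_exists_quasiTotal_conditional
    {X A B : Type*} (f : X → A × B → ℝ≥0∞) (hf : ∀ x, ∑' p, f x p ≤ 1) :
    ∃ (m : X → A → ℝ≥0∞) (c : A × X → B → ℝ≥0∞),
      (∀ x, ∑' a, m x a ≤ 1) ∧
      (∀ p, ∑' b, c p b ≤ 1) ∧
      (∀ p, (∑' b, c p b) = 0 ∨ (∑' b, c p b) = 1) ∧
      (∀ x a b, f x (a, b) = m x a * c (a, x) b) := by
  have hfin : ∀ x a, ∑' b, f x (a, b) ≠ ∞ := fun x a =>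
    ((ENNReal.tsum_slice_le_tsum (f x) a).trans (hf x)).trans_lt ENNReal.one_lt_top |>.ne
  have hquasi : ∀ p : A × X,
      ∑' b, f p.2 (p.1, b) / ∑' b', f p.2 (p.1, b') = 0 ∨
        ∑' b, f p.2 (p.1, b) / ∑' b', f p.2 (p.1, b') = 1 := fun p =>
    ENNReal.tsum_div_tsum_self_eq_zero_or_one _ (hfin p.2 p.1)
  refine ⟨fun x a => ∑' b, f x (a, b), fun p b => f p.2 (p.1, b) / ∑' b', f p.2 (p.1, b'),
    fun x => ?_, fun p => ?_, hquasi, fun x a b => ?_⟩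
  · exact ENNReal.tsum_prod'.symm.trans_le (hf x)
  · rcases hquasi p with h | h <;> simp [h]
  · exact (ENNReal.tsum_mul_div_tsum_self _ (hfin x a) b).symm
end

section
/- Let f be a subdistribution kernel from X to A × B. Define m : X → A → ℝ≥0∞ by m x a = ∑' b, f x (a, b), and define c : A × X → B → ℝ≥0∞ by c (a, x) b = f x (a, b) / m x a (ℝ≥0∞ division, so c (a, x) b = 0 when m x a = 0). Then c is a subdistribution kernel from A × X to B which is quasi-total (∑' b, c (a, x) b = 1 when m x a ≠ 0 and = 0 when m x a = 0), and f x (a, b) = m x a * c (a, x) b for all x, a, b. -/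
open scoped ENNReal

/-! Normalising the `b`-fibre of `f x` by its total mass `m x a` gives total mass `m x a / m x a`,
which is `1` or `0` because `m x a` is finite (it is bounded by the mass of `f x`). Multiplying back
by `m x a` recovers `f x (a, b)`, also when `m x a = 0`, since then the whole fibre vanishes. -/

lemma ENNReal.tsum_fiber_le_tsum_prod {α β : Type*} (g : α × β → ℝ≥0∞) (a : α) :
    ∑' b, g (a, b) ≤ ∑' p, g p := by
  rw [ENNReal.tsum_prod']
  exact ENNReal.le_tsum (f := fun a => ∑' b, g (a, b)) a

lemma ENNReal.tsum_mul_div_tsum_cancel {β : Type*} {g : β → ℝ≥0∞} (hg : ∑' b, g b ≠ ∞) (b : β) :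
    (∑' b', g b') * (g b / ∑' b', g b') = g b :=
  ENNReal.mul_div_cancel' (fun h => ENNReal.tsum_eq_zero.1 h b) (fun h => absurd h hg)

/-- The explicit quasi-total conditional of a subdistribution kernel
`f : X → A × B`, given by `c (a, x) b = f x (a, b) / m x a` where
`m x a = ∑' b, f x (a, b)` is the marginal. -/
theorem subdistKernel_conditional_spec
    {X A B : Type*} (f : X → A × B → ℝ≥0∞) (hf : ∀ x, ∑' p, f x p ≤ 1)
    (m : X → A → ℝ≥0∞) (hm : ∀ x a, m x a = ∑' b, f x (a, b))
    (c : A × X → B → ℝ≥0∞) (hc : ∀ a x b, c (a, x) b = f x (a, b) / m x a) :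
    (∀ a x, ∑' b, c (a, x) b ≤ 1) ∧
    (∀ a x, m x a ≠ 0 → ∑' b, c (a, x) b = 1) ∧
    (∀ a x, m x a = 0 → ∑' b, c (a, x) b = 0) ∧
    (∀ x a b, f x (a, b) = m x a * c (a, x) b) := by
  have hm_ne_top : ∀ x a, m x a ≠ ∞ := fun x a =>
    (((hm x a).trans_le ((ENNReal.tsum_fiber_le_tsum_prod (f x) a).trans (hf x))).trans_lt
      ENNReal.one_lt_top).ne
  have hc_sum : ∀ a x, ∑' b, c (a, x) b = m x a / m x a := fun a x => by
    simp only [hc, div_eq_mul_inv, ENNReal.tsum_mul_right, ← hm]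
  refine ⟨fun a x => (hc_sum a x).trans_le ENNReal.div_self_le_one,
    fun a x h => (hc_sum a x).trans (ENNReal.div_self h (hm_ne_top x a)),
    fun a x h => by rw [hc_sum, h, ENNReal.zero_div], fun x a b => ?_⟩
  rw [hc, hm]
  exact (ENNReal.tsum_mul_div_tsum_cancel (hm x a ▸ hm_ne_top x a) b).symm
end

section
/- Let f be a subdistribution kernel from X to Y. Then the quasi-totality equation f x y = f x y * (∑' y', f x y') holds for all x : X and y : Y (this is the string-diagrammatic condition f = copy ; (f ⊗ (f ; discard)) computed in the Kleisli category of the subdistribution monad) if and only if for every x, ∑' y, f x y = 0 or ∑' y, f x y = 1, i.e. for every x the subdistribution f x either fails surely or is a total probability distribution. -/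
open scoped ENNReal

/-- A subdistribution kernel `f` satisfies the string-diagrammatic quasi-totality
equation `f = copy ; (f ⊗ (f ; discard))` iff on each input it either fails
surely or gives a total probability distribution. -/
theorem subdistKernel_quasiTotal_iff
    {X Y : Type*} (f : X → Y → ℝ≥0∞) (hf : ∀ x, ∑' y, f x y ≤ 1) :
    (∀ x y, f x y = f x y * ∑' y', f x y') ↔
      (∀ x, (∑' y, f x y) = 0 ∨ (∑' y, f x y) = 1) := by
  constructor
  · intro h x
    set S := ∑' y, f x y with hS
    have hsum : S = S * S := by
      calc S = ∑' y, f x y * S := by rw [hS]; exact tsum_congr fun y => h x y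
        _ = S * S := by rw [ENNReal.tsum_mul_right]
    have hlt : S < ⊤ := lt_of_le_of_lt (hf x) (by norm_num)
    rcases eq_or_ne S 0 with h0 | h0
    · exact Or.inl h0
    · right
      have := hsum
      nth_rewrite 1 [← mul_one S] at this
      exact (ENNReal.mul_right_inj h0 hlt.ne).mp this.symm
  · intro h x y
    rcases h x with h0 | h1
    · have : f x y = 0 := by
        have := ENNReal.le_tsum (f := fun y => f x y) y
        simpa [h0] using this
      simp [this]
    · rw [h1, mul_one]
end

section
/- Let σ be a subdistribution on X and g a subdistribution kernel from X to Y, and let g†σ be the Bayesian inversion of g with respect to σ. Then: (i) g†σ is a subdistribution kernel from Y to X and is quasi-total, with ∑' x, g†σ y x = 1 whenever ∑' x', σ x' * g x' y ≠ 0 and ∑' x, g†σ y x = 0 otherwise; and (ii) (synthetic Bayes' theorem in the Kleisli category of the subdistribution monad) for every x : X and y : Y, σ x * g x y = (∑' x', σ x' * g x' y) * g†σ y x; in particular, for a deterministic observation y₀ : Y, the subdistribution x ↦ σ x * g x y₀ obtained by sampling x from σ, sampling y from g x, and conditioning on y = y₀ equals the scalar ∑' x', σ x' * g x' y₀ times the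 Bayesian inversion g†σ y₀. -/
/-!
The evidence `∑' x', σ x' * g x' y` is at most `1`, hence finite, so multiplying the quotient
`bayesInv σ g y x` back by it recovers `σ x * g x y`; when the evidence vanishes, so does every
summand `σ x * g x y`, and `0 / 0 = 0` makes both sides zero.
-/

open scoped ENNReal

/-- The Bayesian inversion of a subdistribution kernel `g : X → Y` with
respect to a subdistribution `σ` on `X`. -/
noncomputable def bayesInv {X Y : Type*} (σ : X → ℝ≥0∞) (g : X → Y → ℝ≥0∞)
    (y : Y) (x : X) : ℝ≥0∞ :=
  (σ x * g x y) / ∑' x', σ x' * g x' y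

section BayesianInversion

variable {X Y : Type*} (σ : X → ℝ≥0∞) (g : X → Y → ℝ≥0∞)

theorem tsum_mul_kernel_le_one (hσ : ∑' x, σ x ≤ 1) (hg : ∀ x, ∑' y, g x y ≤ 1) (y : Y) :
    ∑' x, σ x * g x y ≤ 1 :=
  calc ∑' x, σ x * g x y ≤ ∑' x, σ x :=
        ENNReal.tsum_le_tsum fun x =>
          mul_le_of_le_one_right' ((ENNReal.le_tsum y).trans (hg x))
    _ ≤ 1 := hσ

theorem tsum_bayesInv (y : Y) :
    ∑' x, bayesInv σ g y x = (∑' x, σ x * g x y) / ∑' x, σ x * g x y := by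
  simp only [bayesInv, div_eq_mul_inv, ENNReal.tsum_mul_right]

theorem tsum_mul_mul_bayesInv {y : Y} (hfin : ∑' x, σ x * g x y ≠ ∞) (x : X) :
    (∑' x', σ x' * g x' y) * bayesInv σ g y x = σ x * g x y :=
  ENNReal.mul_div_cancel' (fun h0 => ENNReal.tsum_eq_zero.1 h0 x) (fun htop => absurd htop hfin)

end BayesianInversion

/-- Synthetic Bayes' theorem in the Kleisli category of the subdistribution
monad: the Bayesian inversion is a quasi-total subdistribution kernel, and
conditioning on a deterministic observation `y` equals, up to the scalar
`∑' x', σ x' * g x' y`, evaluating the Bayesian inversion at `y`. -/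
theorem subdist_bayes
    {X Y : Type*} (σ : X → ℝ≥0∞) (hσ : ∑' x, σ x ≤ 1)
    (g : X → Y → ℝ≥0∞) (hg : ∀ x, ∑' y, g x y ≤ 1) :
    (∀ y, ∑' x, bayesInv σ g y x ≤ 1) ∧
    (∀ y, (∑' x', σ x' * g x' y) ≠ 0 → ∑' x, bayesInv σ g y x = 1) ∧
    (∀ y, (∑' x', σ x' * g x' y) = 0 → ∑' x, bayesInv σ g y x = 0) ∧
    (∀ x y, σ x * g x y = (∑' x', σ x' * g x' y) * bayesInv σ g y x) := by
  have hfin : ∀ y, ∑' x, σ x * g x y ≠ ∞ := fun y =>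
    ne_top_of_le_ne_top ENNReal.one_ne_top (tsum_mul_kernel_le_one σ g hσ hg y)
  refine ⟨fun y => ?_, fun y h0 => ?_, fun y h0 => ?_, fun x y => ?_⟩
  · rw [tsum_bayesInv]
    exact ENNReal.div_self_le_one
  · rw [tsum_bayesInv, ENNReal.div_self h0 (hfin y)]
  · rw [tsum_bayesInv, h0, ENNReal.zero_div]
  · rw [tsum_mul_mul_bayesInv σ g (hfin y)]
end

section
/- Bayesian inversions compose: let σ be a subdistribution on X, let c be a subdistribution kernel from X to Y and d a subdistribution kernel from Y to Z. Write σ;c for the subdistribution on Y given by (σ;c) y = ∑' x, σ x * c x y, and c;d for the composite kernel (c;d) x z = ∑' y, c x y * d y z. Then for all z : Z and x : X, (c;d)†σ z x = ∑' y, d†(σ;c) z y * c†σ y x. -/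
open scoped ENNReal

/-! The marginal `(σ ; c ; d) z` is both the normaliser of `(c ; d)†σ` at `z` and of
`d†(σ ; c)` at `z`, so each summand of the right-hand side is the joint weight
`σ x * c x y * d y z` over that normaliser, once the factor `(σ ; c) y` cancels.
This cancellation needs `(σ ; c) y < ∞`, which is where the subdistribution
bounds come in. -/

theorem tsum_mul_tsum_mul_assoc {X Y : Type*} (σ : X → ℝ≥0∞) (c : X → Y → ℝ≥0∞)
    (e : Y → ℝ≥0∞) :
    ∑' x, σ x * ∑' y, c x y * e y = ∑' y, (∑' x, σ x * c x y) * e y := by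
  calc ∑' x, σ x * ∑' y, c x y * e y = ∑' x, ∑' y, σ x * c x y * e y := by
        simp only [← ENNReal.tsum_mul_left, mul_assoc]
    _ = ∑' y, ∑' x, σ x * c x y * e y := ENNReal.tsum_comm
    _ = ∑' y, (∑' x, σ x * c x y) * e y := by simp only [ENNReal.tsum_mul_right]

theorem tsum_mul_le_one {X Y : Type*} {σ : X → ℝ≥0∞} (hσ : ∑' x, σ x ≤ 1)
    {c : X → Y → ℝ≥0∞} (hc : ∀ x, ∑' y, c x y ≤ 1) (y : Y) :
    ∑' x, σ x * c x y ≤ 1 :=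
  calc ∑' x, σ x * c x y ≤ ∑' x, σ x * 1 :=
        ENNReal.tsum_le_tsum fun x => mul_le_mul_right ((ENNReal.le_tsum y).trans (hc x)) _
    _ ≤ 1 := by simpa only [mul_one] using hσ

theorem ENNReal.mul_div_mul_div_cancel_of_le {a b m n : ℝ≥0∞} (ham : a ≤ m) (hm : m ≠ ∞) :
    m * b / n * (a / m) = a * b / n := by
  have hcancel : m * (a / m) = a :=
    ENNReal.mul_div_cancel' (fun h => le_antisymm (h ▸ ham) zero_le) (fun h => absurd h hm)
  calc m * b / n * (a / m) = m * (a / m) * b / n := by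
        simp only [div_eq_mul_inv]; ring
    _ = a * b / n := by rw [hcancel]

theorem bayesInv_comp_general
    {X Y Z : Type*} (σ : X → ℝ≥0∞) (hσ : ∑' x, σ x ≤ 1)
    (c : X → Y → ℝ≥0∞) (hc : ∀ x, ∑' y, c x y ≤ 1)
    (d : Y → Z → ℝ≥0∞) :
    ∀ (z : Z) (x : X),
      bayesInv σ (fun x z => ∑' y, c x y * d y z) z x
        = ∑' y, bayesInv (fun y => ∑' x', σ x' * c x' y) d z y * bayesInv σ c y x := by
  intro z x
  have hfinite : ∀ y, ∑' x', σ x' * c x' y ≠ ∞ := fun y =>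
    ne_top_of_le_ne_top ENNReal.one_ne_top (tsum_mul_le_one hσ hc y)
  simp only [bayesInv, tsum_mul_tsum_mul_assoc]
  calc (σ x * ∑' y, c x y * d y z) / ∑' y, (∑' x', σ x' * c x' y) * d y z
      = ∑' y, σ x * c x y * d y z / ∑' y, (∑' x', σ x' * c x' y) * d y z := by
        simp only [div_eq_mul_inv, ← ENNReal.tsum_mul_right, ← ENNReal.tsum_mul_left, mul_assoc]
    _ = _ := tsum_congr fun y =>
        (ENNReal.mul_div_mul_div_cancel_of_le (ENNReal.le_tsum x) (hfinite y)).symm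

/-- Bayesian inversions compose: the inversion of `c ; d` with respect to `σ`
is the inversion of `d` with respect to `σ ; c`, followed by the inversion of
`c` with respect to `σ`. -/
theorem bayesInv_comp
    {X Y Z : Type*} (σ : X → ℝ≥0∞) (hσ : ∑' x, σ x ≤ 1)
    (c : X → Y → ℝ≥0∞) (hc : ∀ x, ∑' y, c x y ≤ 1)
    (d : Y → Z → ℝ≥0∞) (hd : ∀ y, ∑' z, d y z ≤ 1) :
    ∀ (z : Z) (x : X),
      bayesInv σ (fun x z => ∑' y, c x y * d y z) z x
        = ∑' y, bayesInv (fun y => ∑' x', σ x' * c x' y) d z y * bayesInv σ c y x :=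
  bayesInv_comp_general σ hσ c hc d
end

section
/- Pearl's and Jeffrey's updates coincide on deterministic point evidence: let σ be a subdistribution on X, let c be a subdistribution kernel from X to Y, and let y₀ : Y. Let q : Y → ℝ≥0∞ be the deterministic predicate q y = 1 if y = y₀ and q y = 0 otherwise, and let p = c;q be the effect p x = ∑' y, c x y * q y. Then Pearl's updated prior, namely the Bayesian inversion of p with respect to σ, x ↦ (σ x * p x) / (∑' x', σ x' * p x'), equals Jeffrey's updated prior on the point evidence at y₀, namely x ↦ ∑' y, q y * c†σ y x. -/
open scoped ENNReal

/-- Pearl's and Jeffrey's updates coincide on deterministic point evidence. -/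
theorem pearl_eq_jeffrey_on_point_evidence
    {X Y : Type*} (σ : X → ℝ≥0∞) (hσ : ∑' x, σ x ≤ 1)
    (c : X → Y → ℝ≥0∞) (hc : ∀ x, ∑' y, c x y ≤ 1) (y₀ : Y) [DecidableEq Y]
    (q : Y → ℝ≥0∞) (hq : ∀ y, q y = if y = y₀ then 1 else 0)
    (p : X → ℝ≥0∞) (hp : ∀ x, p x = ∑' y, c x y * q y) :
    (fun x => (σ x * p x) / ∑' x', σ x' * p x')
      = fun x => ∑' y, q y * bayesInv σ c y x := by
  have hp' : ∀ x, p x = c x y₀ := by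
    intro x
    rw [hp]
    rw [tsum_eq_single y₀]
    · simp [hq]
    · intro y hy; simp [hq, hy]
  funext x
  rw [tsum_eq_single y₀]
  · simp only [hq, if_pos rfl, one_mul, bayesInv]
    simp only [hp']
    simp
  · intro y hy; simp [hq, hy]
end

section
/- Sub-probability kernels between standard Borel spaces admit quasi-total conditionals (subBorelStoch is a partial Markov category): let X, A, B be nonempty standard Borel spaces and let κ : Kernel X (A × B) be a kernel with κ x Set.univ ≤ 1 for every x (a sub-probability kernel). Then there exists a kernel c : Kernel (A × X) B such that (i) for every a : A and x : X, the measure c (a, x) is either the zero measure or a probability measure, and (ii) for every x : X and all measurable sets S ⊆ A and T ⊆ B, κ x (S ×ˢ T) = ∫⁻ a in S, c (a, x) T ∂((κ x).map Prod.fst). -/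
open MeasureTheory ProbabilityTheory

/-- Sub-probability kernels between standard Borel spaces admit quasi-total
conditionals: `subBorelStoch` is a partial Markov category. -/
theorem subProbabilityKernel_exists_quasiTotal_condKernel
    {X A B : Type*}
    [MeasurableSpace X] [StandardBorelSpace X] [Nonempty X]
    [MeasurableSpace A] [StandardBorelSpace A] [Nonempty A]
    [MeasurableSpace B] [StandardBorelSpace B] [Nonempty B]
    (κ : Kernel X (A × B)) (hκ : ∀ x, κ x Set.univ ≤ 1) :
    ∃ c : Kernel (A × X) B,
      (∀ (a : A) (x : X), c (a, x) = 0 ∨ IsProbabilityMeasure (c (a, x))) ∧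
      ∀ (x : X) (S : Set A) (T : Set B), MeasurableSet S → MeasurableSet T →
        κ x (S ×ˢ T) = ∫⁻ a in S, c (a, x) T ∂((κ x).map Prod.fst) := by
  have : IsFiniteKernel κ := ⟨⟨1, ENNReal.one_lt_top, hκ⟩⟩
  refine ⟨(Kernel.condKernel κ).comap Prod.swap measurable_swap, ?_, ?_⟩
  · intro a x
    right
    simp only [Kernel.comap_apply]
    infer_instance
  · intro x S T hS hT
    have h := κ.disintegrate κ.condKernel
    have hx : κ x (S ×ˢ T) = (Kernel.fst κ ⊗ₖ Kernel.condKernel κ) x (S ×ˢ T) := by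
      rw [h]
    rw [hx, Kernel.compProd_apply (hS.prod hT)]
    rw [← Kernel.fst_apply]
    rw [← lintegral_indicator hS]
    congr 1
    ext a
    simp only [Kernel.comap_apply, Prod.swap_prod_mk, Set.indicator_apply]
    by_cases ha : a ∈ S <;> simp [ha]
end

section
/- A monad structure on a composite functor whose unit and multiplication factor through a natural transformation yields a distributive law: let C be a category, let S and T be monads on C with units ηˢ, ηᵀ and multiplications μˢ, μᵀ, and let U be a monad on C whose underlying functor is S.toFunctor ⋙ T.toFunctor (so U.obj X = T(S X)). Let lam : T.toFunctor ⋙ S.toFunctor ⟶ S.toFunctor ⋙ T.toFunctor be a natural transformation with components lam_X : S(T X) ⟶ T(S X). Assume (i) the unit of U satisfies ηᵁ_X = (ηˢ)_X ≫ (ηᵀ)_{S X} for every X, and (ii) the multiplication of U satisfies μᵁ_X = T.map (lam_{S X}) ≫ (μᵀ)_{S (S X)} ≫ T.map ((μˢ)_X) for every X. Then lam is a distributive law of S over T, i.e. it satisfies the four Beck axioms: (ηˢ)_{T X} ≫ lam_X = T.map ((ηˢ)_X); S.map ((ηᵀ)_X) ≫ lam_X = (ηᵀ)_{S X}; (μˢ)_{T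 X} ≫ lam_X = S.map (lam_X) ≫ lam_{S X} ≫ T.map ((μˢ)_X); and S.map ((μᵀ)_X) ≫ lam_X = lam_{T X} ≫ T.map (lam_X) ≫ (μᵀ)_{S X}, for every object X of C. -/
open CategoryTheory

/-- A monad structure on the composite functor `S ⋙ T` whose unit and
multiplication factor through a natural transformation
`lam : T ⋙ S ⟶ S ⋙ T` makes `lam` a distributive law of `S` over `T`,
i.e. `lam` satisfies the four Beck axioms. -/
theorem distributiveLaw_of_compositeMonad
    {C : Type*} [Category C] (S T : Monad C)
    (ηU : 𝟭 C ⟶ S.toFunctor ⋙ T.toFunctor)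
    (μU : (S.toFunctor ⋙ T.toFunctor) ⋙ (S.toFunctor ⋙ T.toFunctor) ⟶
      S.toFunctor ⋙ T.toFunctor)
    (U_left_unit : ∀ X : C,
      ηU.app ((S.toFunctor ⋙ T.toFunctor).obj X) ≫ μU.app X = 𝟙 _)
    (U_right_unit : ∀ X : C,
      (S.toFunctor ⋙ T.toFunctor).map (ηU.app X) ≫ μU.app X = 𝟙 _)
    (U_assoc : ∀ X : C,
      (S.toFunctor ⋙ T.toFunctor).map (μU.app X) ≫ μU.app X
        = μU.app ((S.toFunctor ⋙ T.toFunctor).obj X) ≫ μU.app X)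
    (lam : T.toFunctor ⋙ S.toFunctor ⟶ S.toFunctor ⋙ T.toFunctor)
    (hη : ∀ X : C, ηU.app X = S.η.app X ≫ T.η.app (S.obj X))
    (hμ : ∀ X : C, μU.app X
        = T.map (lam.app (S.obj X)) ≫ T.μ.app (S.obj (S.obj X)) ≫ T.map (S.μ.app X)) :
    ∀ X : C,
      (S.η.app (T.obj X) ≫ lam.app X = T.map (S.η.app X)) ∧
      (S.map (T.η.app X) ≫ lam.app X = T.η.app (S.obj X)) ∧
      (S.μ.app (T.obj X) ≫ lam.app X
        = S.map (lam.app X) ≫ lam.app (S.obj X) ≫ T.map (S.μ.app X)) ∧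
      (S.map (T.μ.app X) ≫ lam.app X
        = lam.app (T.obj X) ≫ T.map (lam.app X) ≫ T.μ.app (S.obj X)) := by
  -- componentwise naturality helper lemmas
  have ηTc : ∀ {A B : C} (f : A ⟶ B), T.η.app A ≫ T.map f = f ≫ T.η.app B := by
    intro A B f; simpa using (T.η.naturality f).symm
  have ηTca : ∀ {A B : C} (f : A ⟶ B) {Z : C} (g : T.obj B ⟶ Z),
      T.η.app A ≫ T.map f ≫ g = f ≫ T.η.app B ≫ g := by
    intro A B f Z g; rw [← Category.assoc, ηTc, Category.assoc]
  have ηSca : ∀ {A B : C} (f : A ⟶ B) {Z : C} (g : S.obj B ⟶ Z),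
      S.η.app A ≫ S.map f ≫ g = f ≫ S.η.app B ≫ g := by
    intro A B f Z g
    rw [← Category.assoc, show S.η.app A ≫ S.map f = f ≫ S.η.app B by
      simpa using (S.η.naturality f).symm, Category.assoc]
  have μTc : ∀ {A B : C} (f : A ⟶ B), T.map (T.map f) ≫ T.μ.app B = T.μ.app A ≫ T.map f := by
    intro A B f; simpa using T.μ.naturality f
  have μTca : ∀ {A B : C} (f : A ⟶ B) {Z : C} (g : T.obj B ⟶ Z),
      T.map (T.map f) ≫ T.μ.app B ≫ g = T.μ.app A ≫ T.map f ≫ g := by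
    intro A B f Z g; rw [← Category.assoc, μTc, Category.assoc]
  have μSc : ∀ {A B : C} (f : A ⟶ B), S.map (S.map f) ≫ S.μ.app B = S.μ.app A ≫ S.map f := by
    intro A B f; simpa using S.μ.naturality f
  have μSca : ∀ {A B : C} (f : A ⟶ B) {Z : C} (g : S.obj B ⟶ Z),
      S.map (S.map f) ≫ S.μ.app B ≫ g = S.μ.app A ≫ S.map f ≫ g := by
    intro A B f Z g; rw [← Category.assoc, μSc, Category.assoc]
  have lamc : ∀ {A B : C} (f : A ⟶ B),
      S.map (T.map f) ≫ lam.app B = lam.app A ≫ T.map (S.map f) := by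
    intro A B f; simpa using lam.naturality f
  have lamca : ∀ {A B : C} (f : A ⟶ B) {Z : C} (g : T.obj (S.obj B) ⟶ Z),
      S.map (T.map f) ≫ lam.app B ≫ g = lam.app A ≫ T.map (S.map f) ≫ g := by
    intro A B f Z g; rw [← Category.assoc, lamc, Category.assoc]
  -- (P): precomposing μU with the unit of T
  have P : ∀ X : C, T.η.app (S.obj (T.obj (S.obj X))) ≫ μU.app X
      = lam.app (S.obj X) ≫ T.map (S.μ.app X) := by
    intro X
    rw [hμ X, ηTca]
    simp
  have Pa : ∀ (X : C) {Z : C} (g : T.obj (S.obj X) ⟶ Z),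
      T.η.app (S.obj (T.obj (S.obj X))) ≫ μU.app X ≫ g
        = lam.app (S.obj X) ≫ T.map (S.μ.app X) ≫ g := by
    intro X Z g; rw [← Category.assoc, P X, Category.assoc]
  have swap : ∀ X : C,
      S.map (μU.app X) ≫ T.η.app (S.obj (T.obj (S.obj X))) ≫ μU.app X
        = T.η.app (S.obj (T.obj (S.obj (T.obj (S.obj X)))))
            ≫ T.map (S.map (μU.app X)) ≫ μU.app X := by
    intro X
    exact (ηTca (S.map (μU.app X)) (μU.app X)).symm
  -- (*): lam in terms of lam at SX
  have star : ∀ X : C,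
      S.map (T.map (S.η.app X)) ≫ lam.app (S.obj X) ≫ T.map (S.μ.app X) = lam.app X := by
    intro X
    rw [lamca, ← Functor.map_comp]
    simp
  have F : ∀ X : C, lam.app X
      = S.map (T.map (S.η.app X)) ≫ T.η.app (S.obj (T.obj (S.obj X))) ≫ μU.app X := by
    intro X; rw [P X, star X]
  -- consequence of the left unit law of U
  have L' : ∀ X : C,
      S.η.app (T.obj (S.obj X)) ≫ lam.app (S.obj X) ≫ T.map (S.μ.app X)
        = 𝟙 (T.obj (S.obj X)) := by
    intro X
    have h := U_left_unit X
    rw [hη] at h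
    simp only [Functor.comp_obj] at h
    rw [Category.assoc, P X] at h
    exact h
  -- Beck axiom 1
  have Ax1 : ∀ X : C, S.η.app (T.obj X) ≫ lam.app X = T.map (S.η.app X) := by
    intro X
    rw [← star X, ηSca, L' X, Category.comp_id]
  -- Beck axiom 2, via the right unit law of U
  have Ax2 : ∀ X : C, S.map (T.η.app X) ≫ lam.app X = T.η.app (S.obj X) := by
    intro X
    have h := U_right_unit X
    rw [hη X, hμ X] at h
    simp only [Functor.comp_obj, Functor.comp_map, Functor.map_comp, Category.assoc, Functor.id_obj] at h
    have R' : S.map (S.η.app X) ≫ S.map (T.η.app (S.obj X)) ≫ lam.app (S.obj X)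
        ≫ T.map (S.μ.app X) = T.η.app (S.obj X) := by
      conv_rhs => rw [← Category.comp_id (T.η.app (S.obj X)), ← h]
      rw [ηTca, ηTca, ηTca]
      simp
    calc S.map (T.η.app X) ≫ lam.app X
        = S.map (T.η.app X) ≫ S.map (T.map (S.η.app X)) ≫ lam.app (S.obj X)
            ≫ T.map (S.μ.app X) := by rw [star X]
      _ = S.map (S.η.app X) ≫ S.map (T.η.app (S.obj X)) ≫ lam.app (S.obj X)
            ≫ T.map (S.μ.app X) := by
          rw [← Functor.map_comp_assoc, ηTc, Functor.map_comp_assoc]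
      _ = T.η.app (S.obj X) := R'
  have Ax2a : ∀ (Y : C) {Z : C} (g : T.obj (S.obj Y) ⟶ Z),
      S.map (T.η.app Y) ≫ lam.app Y ≫ g = T.η.app (S.obj Y) ≫ g := by
    intro Y Z g; rw [← Category.assoc, Ax2 Y]
  -- Beck axiom 3, via associativity of U
  have Ax3 : ∀ X : C, S.μ.app (T.obj X) ≫ lam.app X
      = S.map (lam.app X) ≫ lam.app (S.obj X) ≫ T.map (S.μ.app X) := by
    intro X
    have hA := U_assoc X
    simp only [Functor.comp_obj, Functor.comp_map] at hA
    symm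
    calc S.map (lam.app X) ≫ lam.app (S.obj X) ≫ T.map (S.μ.app X)
        = S.map (lam.app X) ≫ T.η.app (S.obj (T.obj (S.obj X))) ≫ μU.app X := by
          rw [← P X]
      _ = S.map (S.map (T.map (S.η.app X))) ≫ S.map (T.η.app (S.obj (T.obj (S.obj X))))
            ≫ S.map (μU.app X) ≫ T.η.app (S.obj (T.obj (S.obj X))) ≫ μU.app X := by
          rw [F X]; simp only [Functor.map_comp, Category.assoc]
      _ = S.map (S.map (T.map (S.η.app X))) ≫ S.map (T.η.app (S.obj (T.obj (S.obj X))))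
            ≫ T.η.app (S.obj (T.obj (S.obj (T.obj (S.obj X)))))
            ≫ T.map (S.map (μU.app X)) ≫ μU.app X := by
          rw [swap X]
      _ = S.map (S.map (T.map (S.η.app X))) ≫ S.map (T.η.app (S.obj (T.obj (S.obj X))))
            ≫ T.η.app (S.obj (T.obj (S.obj (T.obj (S.obj X)))))
            ≫ μU.app (T.obj (S.obj X)) ≫ μU.app X := by
          rw [hA]
      _ = S.map (S.map (T.map (S.η.app X))) ≫ S.map (T.η.app (S.obj (T.obj (S.obj X))))
            ≫ lam.app (S.obj (T.obj (S.obj X)))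
            ≫ T.map (S.μ.app (T.obj (S.obj X))) ≫ μU.app X := by
          rw [Pa (T.obj (S.obj X))]
      _ = S.map (S.map (T.map (S.η.app X))) ≫ T.η.app (S.obj (S.obj (T.obj (S.obj X))))
            ≫ T.map (S.μ.app (T.obj (S.obj X))) ≫ μU.app X := by
          rw [Ax2a]
      _ = S.map (S.map (T.map (S.η.app X))) ≫ S.μ.app (T.obj (S.obj X))
            ≫ T.η.app (S.obj (T.obj (S.obj X))) ≫ μU.app X := by
          rw [ηTca]
      _ = S.μ.app (T.obj X) ≫ S.map (T.map (S.η.app X))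
            ≫ T.η.app (S.obj (T.obj (S.obj X))) ≫ μU.app X := by
          rw [μSca]; simp only [Functor.id_obj]
      _ = S.μ.app (T.obj X) ≫ lam.app X := by rw [← F X]
  -- key computations for axiom 4
  have key3 : ∀ X : C, T.map (S.map (T.map (S.η.app X))) ≫ μU.app X
      = T.map (lam.app X) ≫ T.μ.app (S.obj X) := by
    intro X
    rw [hμ X, ← Functor.map_comp_assoc, lamc, Functor.map_comp_assoc, μTca,
      ← Functor.map_comp]
    simp
  have key1 : ∀ X : C,
      T.map (S.η.app (T.obj X) ≫ S.map (T.map (S.η.app X))) ≫ μU.app X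
        = T.μ.app X ≫ T.map (S.η.app X) := by
    intro X
    rw [Functor.map_comp_assoc, key3 X, ← Functor.map_comp_assoc, Ax1 X, μTc]
    simp
  have key2 : ∀ X : C,
      S.map (S.η.app (T.obj X) ≫ S.map (T.map (S.η.app X))) ≫ S.μ.app (T.obj (S.obj X))
        = S.map (T.map (S.η.app X)) := by
    intro X
    rw [Functor.map_comp_assoc, μSc]
    simp
  -- associativity consequence (A')
  have A' : ∀ X : C, S.map (μU.app X) ≫ lam.app (S.obj X) ≫ T.map (S.μ.app X)
      = lam.app (S.obj (T.obj (S.obj X))) ≫ T.map (S.μ.app (T.obj (S.obj X)))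
          ≫ μU.app X := by
    intro X
    have hA := U_assoc X
    simp only [Functor.comp_obj, Functor.comp_map] at hA
    calc S.map (μU.app X) ≫ lam.app (S.obj X) ≫ T.map (S.μ.app X)
        = S.map (μU.app X) ≫ T.η.app (S.obj (T.obj (S.obj X))) ≫ μU.app X := by
          rw [← P X]
      _ = T.η.app (S.obj (T.obj (S.obj (T.obj (S.obj X)))))
            ≫ T.map (S.map (μU.app X)) ≫ μU.app X := by
          rw [swap X]
      _ = T.η.app (S.obj (T.obj (S.obj (T.obj (S.obj X)))))
            ≫ μU.app (T.obj (S.obj X)) ≫ μU.app X := by rw [hA]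
      _ = lam.app (S.obj (T.obj (S.obj X)))
            ≫ T.map (S.μ.app (T.obj (S.obj X))) ≫ μU.app X := by
          rw [Pa (T.obj (S.obj X))]
  -- Beck axiom 4
  have Ax4 : ∀ X : C, S.map (T.μ.app X) ≫ lam.app X
      = lam.app (T.obj X) ≫ T.map (lam.app X) ≫ T.μ.app (S.obj X) := by
    intro X
    calc S.map (T.μ.app X) ≫ lam.app X
        = S.map (T.μ.app X) ≫ S.map (T.map (S.η.app X)) ≫ lam.app (S.obj X)
            ≫ T.map (S.μ.app X) := by rw [star X]
      _ = S.map (T.map (S.η.app (T.obj X) ≫ S.map (T.map (S.η.app X))))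
            ≫ S.map (μU.app X) ≫ lam.app (S.obj X) ≫ T.map (S.μ.app X) := by
          rw [← Functor.map_comp_assoc, ← key1 X, Functor.map_comp_assoc]
      _ = S.map (T.map (S.η.app (T.obj X) ≫ S.map (T.map (S.η.app X))))
            ≫ lam.app (S.obj (T.obj (S.obj X)))
            ≫ T.map (S.μ.app (T.obj (S.obj X))) ≫ μU.app X := by rw [A' X]
      _ = lam.app (T.obj X)
            ≫ T.map (S.map (S.η.app (T.obj X) ≫ S.map (T.map (S.η.app X))))
            ≫ T.map (S.μ.app (T.obj (S.obj X))) ≫ μU.app X := by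
          rw [lamca]; simp only [Functor.id_obj]
      _ = lam.app (T.obj X)
            ≫ T.map (S.map (S.η.app (T.obj X) ≫ S.map (T.map (S.η.app X)))
                ≫ S.μ.app (T.obj (S.obj X))) ≫ μU.app X := by
          rw [← Functor.map_comp_assoc]
      _ = lam.app (T.obj X) ≫ T.map (S.map (T.map (S.η.app X))) ≫ μU.app X := by
          rw [key2 X]
      _ = lam.app (T.obj X) ≫ T.map (lam.app X) ≫ T.μ.app (S.obj X) := by
          rw [key3 X]
  intro X
  exact ⟨Ax1 X, Ax2 X, Ax3 X, Ax4 X⟩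
end

section
/- A symmetric monoidal category in which all joint morphisms split is cartesian: let C be a symmetric monoidal category with unit I, and suppose (i) every object X carries morphisms δ_X : X ⟶ X ⊗ X and ε_X : X ⟶ I forming a cocommutative comonoid (coassociative, counital, cocommutative), and this structure is uniform, i.e. δ_{X⊗Y} = (δ_X ⊗ δ_Y) ≫ (𝟙_X ⊗ swap_{X,Y} ⊗ 𝟙_Y) (up to associators), ε_{X⊗Y} = (ε_X ⊗ ε_Y) ≫ (unitor), δ_I and ε_I are the coherence isomorphisms; (ii) every morphism f : X ⟶ I equals ε_X; and (iii) every morphism f : X ⟶ Y₁ ⊗ Y₂ factors as f = δ_X ≫ (f₁ ⊗ f₂) for some f₁ : X ⟶ Y₁ and f₂ : X ⟶ Y₂. Then C is cartesian monoidal: I is a terminal object, and for all objects Y₁, Y₂, the cone on the pair (Y₁, Y₂) with apex Y₁ ⊗ Y₂ and projections (𝟙_{Y₁} ⊗ ε_{Y₂}) ≫ (right unitor) and (ε_{Y₁} ⊗ 𝟙_{Y₂}) ≫ (left unitor) is a binary product (a limit cone). -/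
open CategoryTheory MonoidalCategory Limits

/-!
Since every morphism into the unit is the counit, `f₂ ≫ ε = ε` and counitality make
`δ X ≫ (f₁ ⊗ f₂)` project back to `f₁` and `f₂`; so this pairing is a lift, and splitting
writes every morphism into `Y₁ ⊗ Y₂` as the pairing of its own projections, giving uniqueness.
-/

section Splitting

variable {C : Type*} [Category C] [MonoidalCategory C]
  {δ : ∀ X : C, X ⟶ X ⊗ X} {ε : ∀ X : C, X ⟶ 𝟙_ C}

theorem diag_comp_tensorHom_comp_fst {X Y₁ Y₂ : C}
    (counit_right : δ X ≫ (𝟙 X ⊗ₘ ε X) ≫ (ρ_ X).hom = 𝟙 X)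
    (f₁ : X ⟶ Y₁) {f₂ : X ⟶ Y₂} (hf₂ : f₂ ≫ ε Y₂ = ε X) :
    δ X ≫ (f₁ ⊗ₘ f₂) ≫ (𝟙 Y₁ ⊗ₘ ε Y₂) ≫ (ρ_ Y₁).hom = f₁ := by
  rw [id_tensorHom] at counit_right
  rw [tensorHom_comp_tensorHom_assoc, Category.comp_id, hf₂, tensorHom_def'_assoc,
    rightUnitor_naturality, reassoc_of% counit_right]

theorem diag_comp_tensorHom_comp_snd {X Y₁ Y₂ : C}
    (counit_left : δ X ≫ (ε X ⊗ₘ 𝟙 X) ≫ (λ_ X).hom = 𝟙 X)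
    {f₁ : X ⟶ Y₁} (hf₁ : f₁ ≫ ε Y₁ = ε X) (f₂ : X ⟶ Y₂) :
    δ X ≫ (f₁ ⊗ₘ f₂) ≫ (ε Y₁ ⊗ₘ 𝟙 Y₂) ≫ (λ_ Y₂).hom = f₂ := by
  rw [tensorHom_id] at counit_left
  rw [tensorHom_comp_tensorHom_assoc, Category.comp_id, hf₁, tensorHom_def_assoc,
    leftUnitor_naturality, reassoc_of% counit_left]

end Splitting

theorem cartesian_of_splitting_general
    {C : Type*} [Category C] [MonoidalCategory C]
    (δ : ∀ X : C, X ⟶ X ⊗ X) (ε : ∀ X : C, X ⟶ 𝟙_ C)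
    (counit_left : ∀ X : C, δ X ≫ (ε X ⊗ₘ 𝟙 X) ≫ (λ_ X).hom = 𝟙 X)
    (counit_right : ∀ X : C, δ X ≫ (𝟙 X ⊗ₘ ε X) ≫ (ρ_ X).hom = 𝟙 X)
    (discard_unique : ∀ (X : C) (f : X ⟶ 𝟙_ C), f = ε X)
    (split : ∀ (X Y₁ Y₂ : C) (f : X ⟶ Y₁ ⊗ Y₂),
      ∃ (f₁ : X ⟶ Y₁) (f₂ : X ⟶ Y₂), f = δ X ≫ (f₁ ⊗ₘ f₂)) :
    Nonempty (IsTerminal (𝟙_ C)) ∧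
    ∀ Y₁ Y₂ : C,
      Nonempty (IsLimit (BinaryFan.mk
        ((𝟙 Y₁ ⊗ₘ ε Y₂) ≫ (ρ_ Y₁).hom)
        ((ε Y₁ ⊗ₘ 𝟙 Y₂) ≫ (λ_ Y₂).hom))) := by
  have discard {X Y : C} (f : X ⟶ Y) : f ≫ ε Y = ε X := discard_unique X _
  have fst {X Y₁ Y₂ : C} (f₁ : X ⟶ Y₁) (f₂ : X ⟶ Y₂) :=
    diag_comp_tensorHom_comp_fst (counit_right X) f₁ (discard f₂)
  have snd {X Y₁ Y₂ : C} (f₁ : X ⟶ Y₁) (f₂ : X ⟶ Y₂) :=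
    diag_comp_tensorHom_comp_snd (counit_left X) (discard f₁) f₂
  refine ⟨⟨IsTerminal.ofUniqueHom ε discard_unique⟩, fun Y₁ Y₂ => ⟨BinaryFan.isLimitMk
    (fun s => δ s.pt ≫ (s.fst ⊗ₘ s.snd)) (fun s => by simpa using fst s.fst s.snd)
    (fun s => by simpa using snd s.fst s.snd) fun s m hm₁ hm₂ => ?_⟩⟩
  obtain ⟨f₁, f₂, rfl⟩ := split _ _ _ m
  simp only [Category.assoc, fst, snd] at hm₁ hm₂
  rw [hm₁, hm₂]

/-- A symmetric monoidal category in which every object carries a uniform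
cocommutative comonoid structure, every morphism into the unit is the counit,
and every joint morphism splits, is cartesian monoidal: the unit is terminal
and the tensor product is a binary product. -/
theorem cartesian_of_splitting
    {C : Type*} [Category C] [MonoidalCategory C] [SymmetricCategory C]
    (δ : ∀ X : C, X ⟶ X ⊗ X) (ε : ∀ X : C, X ⟶ 𝟙_ C)
    (coassoc : ∀ X : C, δ X ≫ (δ X ⊗ₘ 𝟙 X) ≫ (α_ X X X).hom = δ X ≫ (𝟙 X ⊗ₘ δ X))
    (counit_left : ∀ X : C, δ X ≫ (ε X ⊗ₘ 𝟙 X) ≫ (λ_ X).hom = 𝟙 X)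
    (counit_right : ∀ X : C, δ X ≫ (𝟙 X ⊗ₘ ε X) ≫ (ρ_ X).hom = 𝟙 X)
    (cocomm : ∀ X : C, δ X ≫ (β_ X X).hom = δ X)
    (uniform_δ : ∀ X Y : C, δ (X ⊗ Y) = (δ X ⊗ₘ δ Y) ≫ tensorμ X X Y Y)
    (uniform_ε : ∀ X Y : C, ε (X ⊗ Y) = (ε X ⊗ₘ ε Y) ≫ (λ_ (𝟙_ C)).hom)
    (δ_unit : δ (𝟙_ C) = (λ_ (𝟙_ C)).inv)
    (ε_unit : ε (𝟙_ C) = 𝟙 (𝟙_ C))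
    (discard_unique : ∀ (X : C) (f : X ⟶ 𝟙_ C), f = ε X)
    (split : ∀ (X Y₁ Y₂ : C) (f : X ⟶ Y₁ ⊗ Y₂),
      ∃ (f₁ : X ⟶ Y₁) (f₂ : X ⟶ Y₂), f = δ X ≫ (f₁ ⊗ₘ f₂)) :
    Nonempty (IsTerminal (𝟙_ C)) ∧
    ∀ Y₁ Y₂ : C,
      Nonempty (IsLimit (BinaryFan.mk
        ((𝟙 Y₁ ⊗ₘ ε Y₂) ≫ (ρ_ Y₁).hom)
        ((ε Y₁ ⊗ₘ 𝟙 Y₂) ≫ (λ_ Y₂).hom))) :=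
  cartesian_of_splitting_general δ ε counit_left counit_right discard_unique split
end

section
/- In a symmetric monoidal category C satisfying: (i) every object X carries a uniform cocommutative comonoid structure (δ_X : X ⟶ X ⊗ X, ε_X : X ⟶ I), (ii) every morphism f : X ⟶ I equals ε_X, and (iii) every morphism f : X ⟶ Y₁ ⊗ Y₂ factors as f = δ_X ≫ (f₁ ⊗ f₂) for some f₁, f₂ — the components of any such splitting are forced: whenever f = δ_X ≫ (f₁ ⊗ f₂) with f₁ : X ⟶ Y₁ and f₂ : X ⟶ Y₂, necessarily f₁ = f ≫ (𝟙_{Y₁} ⊗ ε_{Y₂}) ≫ (right unitor) and f₂ = f ≫ (ε_{Y₁} ⊗ 𝟙_{Y₂}) ≫ (left unitor). Consequently the comultiplications are natural: for every g : X ⟶ Y, g ≫ δ_Y = δ_X ≫ (g ⊗ g). -/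
open CategoryTheory MonoidalCategory

/-!
Discarding one output of `δ X ≫ (f₁ ⊗ f₂)` recovers the other component: since every map into
the unit is the counit, `f₂ ≫ ε = ε`, so the discarded branch becomes `ε X` and counitality
collapses `δ X ≫ (𝟙 ⊗ ε X)` to the identity. Applied to a splitting of `g ≫ δ Y`, whose
marginals are `g` by counitality at `Y`, this forces both components to be `g`.
-/

section Marginals

variable {C : Type*} [Category C] [MonoidalCategory C] {X Y₁ Y₂ : C}

theorem copy_tensorHom_comp_discard_right (δ : X ⟶ X ⊗ X) {e : X ⟶ 𝟙_ C}
    (counit_right : δ ≫ (𝟙 X ⊗ₘ e) ≫ (ρ_ X).hom = 𝟙 X)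
    (f₁ : X ⟶ Y₁) {f₂ : X ⟶ Y₂} {e₂ : Y₂ ⟶ 𝟙_ C} (h₂ : f₂ ≫ e₂ = e) :
    (δ ≫ (f₁ ⊗ₘ f₂)) ≫ (𝟙 Y₁ ⊗ₘ e₂) ≫ (ρ_ Y₁).hom = f₁ := by
  calc (δ ≫ (f₁ ⊗ₘ f₂)) ≫ (𝟙 Y₁ ⊗ₘ e₂) ≫ (ρ_ Y₁).hom
      = δ ≫ (𝟙 X ⊗ₘ e) ≫ (f₁ ⊗ₘ 𝟙 (𝟙_ C)) ≫ (ρ_ Y₁).hom := by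
        simp only [Category.assoc, tensorHom_comp_tensorHom_assoc, Category.comp_id,
          Category.id_comp, h₂]
    _ = (δ ≫ (𝟙 X ⊗ₘ e) ≫ (ρ_ X).hom) ≫ f₁ := by
        simp only [tensorHom_id, rightUnitor_naturality, Category.assoc]
    _ = f₁ := by rw [counit_right, Category.id_comp]

theorem copy_tensorHom_comp_discard_left (δ : X ⟶ X ⊗ X) {e : X ⟶ 𝟙_ C}
    (counit_left : δ ≫ (e ⊗ₘ 𝟙 X) ≫ (λ_ X).hom = 𝟙 X)
    {f₁ : X ⟶ Y₁} (f₂ : X ⟶ Y₂) {e₁ : Y₁ ⟶ 𝟙_ C} (h₁ : f₁ ≫ e₁ = e) :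
    (δ ≫ (f₁ ⊗ₘ f₂)) ≫ (e₁ ⊗ₘ 𝟙 Y₂) ≫ (λ_ Y₂).hom = f₂ := by
  calc (δ ≫ (f₁ ⊗ₘ f₂)) ≫ (e₁ ⊗ₘ 𝟙 Y₂) ≫ (λ_ Y₂).hom
      = δ ≫ (e ⊗ₘ 𝟙 X) ≫ (𝟙 (𝟙_ C) ⊗ₘ f₂) ≫ (λ_ Y₂).hom := by
        simp only [Category.assoc, tensorHom_comp_tensorHom_assoc, Category.comp_id,
          Category.id_comp, h₁]
    _ = (δ ≫ (e ⊗ₘ 𝟙 X) ≫ (λ_ X).hom) ≫ f₂ := by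
        simp only [id_tensorHom, leftUnitor_naturality, Category.assoc]
    _ = f₂ := by rw [counit_left, Category.id_comp]

end Marginals

theorem copy_natural_of_split {C : Type*} [Category C] [MonoidalCategory C]
    (δ : ∀ X : C, X ⟶ X ⊗ X) (ε : ∀ X : C, X ⟶ 𝟙_ C)
    (counit_left : ∀ X : C, δ X ≫ (ε X ⊗ₘ 𝟙 X) ≫ (λ_ X).hom = 𝟙 X)
    (counit_right : ∀ X : C, δ X ≫ (𝟙 X ⊗ₘ ε X) ≫ (ρ_ X).hom = 𝟙 X)
    (discard_unique : ∀ (X : C) (f : X ⟶ 𝟙_ C), f = ε X)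
    {X Y : C} (g : X ⟶ Y) (split : ∃ (g₁ g₂ : X ⟶ Y), g ≫ δ Y = δ X ≫ (g₁ ⊗ₘ g₂)) :
    g ≫ δ Y = δ X ≫ (g ⊗ₘ g) := by
  obtain ⟨g₁, g₂, hg⟩ := split
  have hg₁ : g₁ = g := by
    rw [← copy_tensorHom_comp_discard_right (δ X) (counit_right X) g₁
      (discard_unique X (g₂ ≫ ε Y)), ← hg, Category.assoc, counit_right, Category.comp_id]
  have hg₂ : g₂ = g := by
    rw [← copy_tensorHom_comp_discard_left (δ X) (counit_left X) g₂
      (discard_unique X (g₁ ≫ ε Y)), ← hg, Category.assoc, counit_left, Category.comp_id]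
  rw [hg, hg₁, hg₂]

theorem splitting_components_forced_and_copy_natural_general
    {C : Type*} [Category C] [MonoidalCategory C]
    (δ : ∀ X : C, X ⟶ X ⊗ X) (ε : ∀ X : C, X ⟶ 𝟙_ C)
    (counit_left : ∀ X : C, δ X ≫ (ε X ⊗ₘ 𝟙 X) ≫ (λ_ X).hom = 𝟙 X)
    (counit_right : ∀ X : C, δ X ≫ (𝟙 X ⊗ₘ ε X) ≫ (ρ_ X).hom = 𝟙 X)
    (discard_unique : ∀ (X : C) (f : X ⟶ 𝟙_ C), f = ε X)
    (split : ∀ (X Y₁ Y₂ : C) (f : X ⟶ Y₁ ⊗ Y₂),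
      ∃ (f₁ : X ⟶ Y₁) (f₂ : X ⟶ Y₂), f = δ X ≫ (f₁ ⊗ₘ f₂)) :
    (∀ (X Y₁ Y₂ : C) (f : X ⟶ Y₁ ⊗ Y₂) (f₁ : X ⟶ Y₁) (f₂ : X ⟶ Y₂),
      f = δ X ≫ (f₁ ⊗ₘ f₂) →
        f₁ = f ≫ (𝟙 Y₁ ⊗ₘ ε Y₂) ≫ (ρ_ Y₁).hom ∧
        f₂ = f ≫ (ε Y₁ ⊗ₘ 𝟙 Y₂) ≫ (λ_ Y₂).hom) ∧
    (∀ (X Y : C) (g : X ⟶ Y), g ≫ δ Y = δ X ≫ (g ⊗ₘ g)) := by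
  refine ⟨fun X Y₁ Y₂ f f₁ f₂ hf => ?_, fun X Y g => ?_⟩
  · subst hf
    exact ⟨(copy_tensorHom_comp_discard_right (δ X) (counit_right X) f₁
        (discard_unique X _)).symm,
      (copy_tensorHom_comp_discard_left (δ X) (counit_left X) f₂ (discard_unique X _)).symm⟩
  · exact copy_natural_of_split δ ε counit_left counit_right discard_unique g
      (split X Y Y (g ≫ δ Y))

/-- In a symmetric monoidal category where every object carries a uniform
cocommutative comonoid structure, every morphism into the unit is the counit,
and every joint morphism splits, the components of any splitting of
`f : X ⟶ Y₁ ⊗ Y₂` are forced to be the corresponding marginals of `f`;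
consequently the comultiplications are natural. -/
theorem splitting_components_forced_and_copy_natural
    {C : Type*} [Category C] [MonoidalCategory C] [SymmetricCategory C]
    (δ : ∀ X : C, X ⟶ X ⊗ X) (ε : ∀ X : C, X ⟶ 𝟙_ C)
    (coassoc : ∀ X : C, δ X ≫ (δ X ⊗ₘ 𝟙 X) ≫ (α_ X X X).hom = δ X ≫ (𝟙 X ⊗ₘ δ X))
    (counit_left : ∀ X : C, δ X ≫ (ε X ⊗ₘ 𝟙 X) ≫ (λ_ X).hom = 𝟙 X)
    (counit_right : ∀ X : C, δ X ≫ (𝟙 X ⊗ₘ ε X) ≫ (ρ_ X).hom = 𝟙 X)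
    (cocomm : ∀ X : C, δ X ≫ (β_ X X).hom = δ X)
    (uniform_δ : ∀ X Y : C, δ (X ⊗ Y) = (δ X ⊗ₘ δ Y) ≫ tensorμ X X Y Y)
    (uniform_ε : ∀ X Y : C, ε (X ⊗ Y) = (ε X ⊗ₘ ε Y) ≫ (λ_ (𝟙_ C)).hom)
    (δ_unit : δ (𝟙_ C) = (λ_ (𝟙_ C)).inv)
    (ε_unit : ε (𝟙_ C) = 𝟙 (𝟙_ C))
    (discard_unique : ∀ (X : C) (f : X ⟶ 𝟙_ C), f = ε X)
    (split : ∀ (X Y₁ Y₂ : C) (f : X ⟶ Y₁ ⊗ Y₂),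
      ∃ (f₁ : X ⟶ Y₁) (f₂ : X ⟶ Y₂), f = δ X ≫ (f₁ ⊗ₘ f₂)) :
    (∀ (X Y₁ Y₂ : C) (f : X ⟶ Y₁ ⊗ Y₂) (f₁ : X ⟶ Y₁) (f₂ : X ⟶ Y₂),
      f = δ X ≫ (f₁ ⊗ₘ f₂) →
        f₁ = f ≫ (𝟙 Y₁ ⊗ₘ ε Y₂) ≫ (ρ_ Y₁).hom ∧
        f₂ = f ≫ (ε Y₁ ⊗ₘ 𝟙 Y₂) ≫ (λ_ Y₂).hom) ∧
    (∀ (X Y : C) (g : X ⟶ Y), g ≫ δ Y = δ X ≫ (g ⊗ₘ g)) :=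
  splitting_components_forced_and_copy_natural_general δ ε counit_left counit_right discard_unique
    split
end
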